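/- Let (M,g) be a compact Riemannian manifold whose Laplacian eigenvalues, listed in decreasing order, are λ_0 = 0, λ_1 = -2p (with eigenspace of dimension p+1), λ_2 = -2q, and all others ≤ -2q, where p < q are positive integers with q > 2p. For Q(f) = ∫[(Δf)^2 - 4fΔf - 4(q-p)^2 f^2], the maximal dimension of a subspace of C^∞(M) on which Q is negative definite equals 1 + (p+1) = p+2. -/

import Mathlib

open scoped Classical DirectSum RealInnerProductSpace

universe u

/-- The stability form `Q(f) = ∫ (Δf)^2 - 4 f Δf - 4(q-p)^2 f^2`, expressed via
the spectral decomposition `C^∞(M) = ⊕ᵢ E_{λᵢ}`: on the eigenspace of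
eigenvalue `lam i` it acts as `(lam i)^2 - 4 lam i - 4(q-p)^2` times the `L²`
inner product. -/
noncomputable def stabQ {ι : Type u} [DecidableEq ι] (E : ι → Type u)
    [∀ i, NormedAddCommGroup (E i)] [∀ i, InnerProductSpace ℝ (E i)]
    (lam : ι → ℝ) (p q : ℕ) (v : ⨁ i, E i) : ℝ :=
  DFinsupp.sum v fun i x => (lam i ^ 2 - 4 * lam i - 4 * ((q : ℝ) - p) ^ 2) * ⟪x, x⟫

lemma stabQ_eq {ι : Type u} [DecidableEq ι] (E : ι → Type u)
    [∀ i, NormedAddCommGroup (E i)] [∀ i, InnerProductSpace ℝ (E i)]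
    (lam : ι → ℝ) (p q : ℕ) (v : ⨁ i, E i) :
    stabQ E lam p q v = ∑ i ∈ DFinsupp.support v,
      (lam i ^ 2 - 4 * lam i - 4 * ((q : ℝ) - p) ^ 2) * ⟪v i, v i⟫ := rfl

/-- Let `M` (the torus `S^p(1/√2) × S^q(1/√2)`) be compact with Laplacian
eigenspace decomposition `⊕ᵢ E_{λᵢ}` (convention `Δf = λf`), with eigenvalues
`lam i0 = 0` (eigenspace of dimension `1`, the constants), `lam i1 = -2p`
(eigenspace of dimension `p + 1`), `lam i2 = -2q`, and all other eigenvalues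
`≤ -2q`, where `p < q` are positive integers with `q > 2p`.  Then the maximal
dimension of a subspace of `C^∞(M)` on which the stability form `Q` is negative
definite equals `1 + (p + 1) = p + 2`. -/
theorem stmt_18 {ι : Type u} [DecidableEq ι] (E : ι → Type u)
    [∀ i, NormedAddCommGroup (E i)] [∀ i, InnerProductSpace ℝ (E i)]
    [∀ i, FiniteDimensional ℝ (E i)]
    (lam : ι → ℝ) (p q : ℕ) (hp : 0 < p) (hpq : p < q) (hq : 2 * p < q)
    (i0 i1 i2 : ι) (h01 : i0 ≠ i1) (h02 : i0 ≠ i2) (h12 : i1 ≠ i2)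
    (hlam0 : lam i0 = 0) (hlam1 : lam i1 = -2 * (p : ℝ))
    (hlam2 : lam i2 = -2 * (q : ℝ))
    (hdim0 : Module.finrank ℝ (E i0) = 1)
    (hdim1 : Module.finrank ℝ (E i1) = p + 1)
    (hspec : ∀ i, i ≠ i0 → i ≠ i1 → lam i ≤ -2 * (q : ℝ)) :
    IsGreatest
      {r : Cardinal.{u} | ∃ W : Submodule ℝ (⨁ i, E i), Module.rank ℝ W = r ∧
        ∀ v ∈ W, v ≠ 0 → stabQ E lam p q v < 0}
      ((p : Cardinal.{u}) + 2) := by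
  have hp' : (1:ℝ) ≤ (p:ℝ) := by exact_mod_cast hp
  have hpq' : (p:ℝ) + 1 ≤ (q:ℝ) := by exact_mod_cast hpq
  have h2pq : 2*(p:ℝ) + 1 ≤ (q:ℝ) := by exact_mod_cast hq
  set c : ι → ℝ := fun i => lam i ^ 2 - 4 * lam i - 4 * ((q : ℝ) - p) ^ 2 with hc
  have hc0 : c i0 < 0 := by simp only [hc, hlam0]; nlinarith
  have hc1 : c i1 < 0 := by simp only [hc, hlam1]; nlinarith
  have hcother : ∀ i, i ≠ i0 → i ≠ i1 → 0 ≤ c i := by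
    intro i h h'
    have hs := hspec i h h'
    simp only [hc]
    nlinarith [sq_nonneg (lam i + 2 * (q:ℝ))]
  have hrankEE : Module.rank ℝ (E i0 × E i1) = (p : Cardinal.{u}) + 2 := by
    rw [rank_prod', ← Module.finrank_eq_rank, ← Module.finrank_eq_rank, hdim0, hdim1]
    push_cast
    ring
  constructor
  · -- there is a subspace of rank p+2 on which Q is negative definite
    set φ : (E i0 × E i1) →ₗ[ℝ] ⨁ i, E i :=
      (DirectSum.lof ℝ ι E i0).comp (LinearMap.fst ℝ _ _) +
      (DirectSum.lof ℝ ι E i1).comp (LinearMap.snd ℝ _ _) with hφdef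
    have hφ : ∀ z : E i0 × E i1,
        φ z = DirectSum.lof ℝ ι E i0 z.1 + DirectSum.lof ℝ ι E i1 z.2 := fun z => rfl
    have hφ0 : ∀ z : E i0 × E i1, (φ z) i0 = z.1 := by
      intro z
      rw [hφ]
      simp only [DirectSum.add_apply, DirectSum.lof_eq_of, DirectSum.of_eq_same,
        DirectSum.of_eq_of_ne _ _ _ h01, add_zero]
    have hφ1 : ∀ z : E i0 × E i1, (φ z) i1 = z.2 := by
      intro z
      rw [hφ]
      simp only [DirectSum.add_apply, DirectSum.lof_eq_of, DirectSum.of_eq_same,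
        DirectSum.of_eq_of_ne _ _ _ h01.symm, zero_add]
    have hφother : ∀ (z : E i0 × E i1) (j : ι), j ≠ i0 → j ≠ i1 → (φ z) j = 0 := by
      intro z j hj0 hj1
      rw [hφ]
      simp only [DirectSum.add_apply, DirectSum.lof_eq_of,
        DirectSum.of_eq_of_ne _ _ _ hj0, DirectSum.of_eq_of_ne _ _ _ hj1,
        add_zero]
    have hinj : Function.Injective φ := by
      rw [injective_iff_map_eq_zero]
      intro z hz
      have h1 : z.1 = 0 := by rw [← hφ0 z, hz]; rfl
      have h2 : z.2 = 0 := by rw [← hφ1 z, hz]; rfl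
      exact Prod.ext h1 h2
    refine ⟨LinearMap.range φ, ?_, ?_⟩
    · rw [← (LinearEquiv.ofInjective φ hinj).rank_eq]
      exact hrankEE
    · rintro v ⟨z, rfl⟩ hv
      rw [stabQ_eq]
      have hsup : ∀ j ∈ DFinsupp.support (φ z), j = i0 ∨ j = i1 := by
        intro j hj
        by_contra hcon
        push_neg at hcon
        exact (DFinsupp.mem_support_iff.mp hj) (hφother z j hcon.1 hcon.2)
      have hne : (DFinsupp.support (φ z)).Nonempty := by
        rw [Finset.nonempty_iff_ne_empty]
        intro h
        exact hv (DFinsupp.support_eq_empty.mp h)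
      have := Finset.sum_lt_sum_of_nonempty hne
        (f := fun j => (lam j ^ 2 - 4 * lam j - 4 * ((q : ℝ) - p) ^ 2) * ⟪(φ z) j, (φ z) j⟫)
        (g := fun _ => (0:ℝ)) ?_
      · simpa using this
      · intro j hj
        have hjne : (φ z) j ≠ 0 := DFinsupp.mem_support_iff.mp hj
        have hpos : 0 < ⟪(φ z) j, (φ z) j⟫ := by
          rw [real_inner_self_eq_norm_sq]
          exact pow_pos (norm_pos_iff.mpr hjne) 2
        have hcj : c j < 0 := by
          rcases hsup j hj with rfl | rfl
          · exact hc0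
          · exact hc1
        have : c j * ⟪(φ z) j, (φ z) j⟫ < 0 := mul_neg_of_neg_of_pos hcj hpos
        simpa [hc] using this
  · -- every such subspace has rank at most p + 2
    rintro r ⟨W, hrank, hneg⟩
    set ψ : W →ₗ[ℝ] E i0 × E i1 :=
      (LinearMap.prod (DirectSum.component ℝ ι E i0) (DirectSum.component ℝ ι E i1)).comp
        W.subtype with hψdef
    have hψinj : Function.Injective ψ := by
      rw [injective_iff_map_eq_zero]
      intro v hv
      have hv0 : (v : ⨁ i, E i) i0 = 0 := congrArg Prod.fst hv
      have hv1 : (v : ⨁ i, E i) i1 = 0 := congrArg Prod.snd hv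
      by_contra hvne
      have hvne' : (v : ⨁ i, E i) ≠ 0 := fun h => hvne (Subtype.ext h)
      have hQ := hneg v v.2 hvne'
      rw [stabQ_eq] at hQ
      have hQ' : (0:ℝ) ≤ ∑ i ∈ DFinsupp.support (v : ⨁ i, E i),
          (lam i ^ 2 - 4 * lam i - 4 * ((q : ℝ) - p) ^ 2) *
            ⟪(v : ⨁ i, E i) i, (v : ⨁ i, E i) i⟫ := by
        apply Finset.sum_nonneg
        intro j hj
        have hj0 : j ≠ i0 := by
          rintro rfl
          exact (DFinsupp.mem_support_iff.mp hj) hv0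
        have hj1 : j ≠ i1 := by
          rintro rfl
          exact (DFinsupp.mem_support_iff.mp hj) hv1
        have := hcother j hj0 hj1
        have h2 : (0:ℝ) ≤ ⟪(v : ⨁ i, E i) j, (v : ⨁ i, E i) j⟫ := real_inner_self_nonneg
        have : (0:ℝ) ≤ c j * ⟪(v : ⨁ i, E i) j, (v : ⨁ i, E i) j⟫ := mul_nonneg this h2
        simpa [hc] using this
      linarith
    calc r = Module.rank ℝ W := hrank.symm
      _ ≤ Module.rank ℝ (E i0 × E i1) := LinearMap.rank_le_of_injective ψ hψinj
      _ = (p : Cardinal.{u}) + 2 := hrankEE
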